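/- arXiv:2105.03335 — 2 statements merged into one kernel-verified Lean document; each statement's English description precedes it below -/
import Mathlib

section
/- Let G(μ,ν,h) be the numbering defined by G(μ,ν,h)⟨n,x⟩ = ν(n) if the universal h-computable partial function κ̃^h(x) diverges and = μ(κ̃^h(x)) if it converges. Then μ ≤ G(μ,ν,h), ν ≤ G(μ,ν,h), and G(μ,ν,h) ≤^{h'} μ ⊕ ν, where h' is the jump of h. -/
/-- Relativized partial recursiveness: `f` is partial recursive in the (total) oracle `O`. -/
inductive OracleRecursiveIn (O : ℕ → ℕ) : (ℕ →. ℕ) → Prop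
  | oracle : OracleRecursiveIn O O
  | zero : OracleRecursiveIn O (pure 0)
  | succ : OracleRecursiveIn O Nat.succ
  | left : OracleRecursiveIn O ↑fun n : ℕ => n.unpair.1
  | right : OracleRecursiveIn O ↑fun n : ℕ => n.unpair.2
  | pair {f g} : OracleRecursiveIn O f → OracleRecursiveIn O g →
      OracleRecursiveIn O fun n => Nat.pair <$> f n <*> g n
  | comp {f g} : OracleRecursiveIn O f → OracleRecursiveIn O g → OracleRecursiveIn O fun n => g n >>= f
  | prec {f g} : OracleRecursiveIn O f → OracleRecursiveIn O g → OracleRecursiveIn O (Nat.unpaired fun a n =>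
      n.rec (f a) fun y IH => do let i ← IH; g (Nat.pair a (Nat.pair y i)))
  | rfind {f} : OracleRecursiveIn O f →
      OracleRecursiveIn O fun a => Nat.rfind fun n => (fun m => m = 0) <$> f (Nat.pair a n)

/-- Computable (many-one style) reducibility between numberings. -/
def NumRed {S : Type*} (μ ν : ℕ → S) : Prop :=
  ∃ f : ℕ → ℕ, Computable f ∧ ∀ n, μ n = ν (f n)

/-- Reducibility between numberings via an `O`-computable total function. -/
def NumRedIn {S : Type*} (O : ℕ → ℕ) (μ ν : ℕ → S) : Prop :=
  ∃ f : ℕ → ℕ, OracleRecursiveIn O ↑f ∧ ∀ n, μ n = ν (f n)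

/-- The join `μ ⊕ ν` of two numberings. -/
def NumJoin {S : Type*} (μ ν : ℕ → S) : ℕ → S :=
  fun n => if n % 2 = 0 then μ (n / 2) else ν (n / 2)

/-- `ν` is `O`-precomplete: every `O`-partial computable function has a total
computable `ν`-totalizer. -/
def Precomplete {S : Type*} (O : ℕ → ℕ) (ν : ℕ → S) : Prop :=
  ∀ ψ : ℕ →. ℕ, OracleRecursiveIn O ψ →
    ∃ t : ℕ → ℕ, Computable t ∧ ∀ (x : ℕ) (hx : (ψ x).Dom), ν (t x) = ν ((ψ x).get hx)

/-- `ν` is `O`-complete with respect to `a`. -/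
def CompleteAt {S : Type*} (O : ℕ → ℕ) (ν : ℕ → S) (a : S) : Prop :=
  ∀ ψ : ℕ →. ℕ, OracleRecursiveIn O ψ →
    ∃ t : ℕ → ℕ, Computable t ∧ (∀ (x : ℕ) (hx : (ψ x).Dom), ν (t x) = ν ((ψ x).get hx)) ∧
      ∀ x : ℕ, ¬ (ψ x).Dom → ν (t x) = a

open Classical in
/-- The jump (halting problem) of a partial function `U`, as a 0-1 valued total function. -/
noncomputable def jumpOf (U : ℕ →. ℕ) : ℕ → ℕ :=
  fun x => if (U x).Dom then 1 else 0

open Classical in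
/-- The operation `G(μ,ν,h)` defined from a universal `h`-partial computable function `U`:
`G⟨n,x⟩ = ν n` if `U x` diverges and `μ (U x)` if it converges. -/
noncomputable def GOp {S : Type*} (μ ν : ℕ → S) (U : ℕ →. ℕ) : ℕ → S :=
  fun m =>
    if hd : (U (Nat.unpair m).2).Dom then μ ((U (Nat.unpair m).2).get hd)
    else ν (Nat.unpair m).1

/-! An index `e` of the identity makes `n ↦ ⟨0, ⟨e, n⟩⟩` a reduction of `μ` to `G`, and an index
`z` of the nowhere defined function makes `n ↦ ⟨n, ⟨z, 0⟩⟩` one of `ν`. Conversely, the jump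
decides whether `κ̃^h(x)` converges and computes `κ̃^h` itself (as `h ≤ h'`), so
`⟨n, x⟩ ↦ 2 κ̃^h(x)` if it converges, `2n + 1` otherwise, is a total `h'`-computable reduction of
`G` to `μ ⊕ ν`. -/

namespace OracleRecursiveIn

variable {O : ℕ → ℕ}

theorem of_partrec {f : ℕ →. ℕ} (hf : Nat.Partrec f) : OracleRecursiveIn O f := by
  induction hf with
  | zero => exact .zero
  | succ => exact .succ
  | left => exact .left
  | right => exact .right
  | pair _ _ ih₁ ih₂ => exact .pair ih₁ ih₂
  | comp _ _ ih₁ ih₂ => exact .comp ih₁ ih₂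
  | prec _ _ ih₁ ih₂ => exact .prec ih₁ ih₂
  | rfind _ ih => exact .rfind ih

theorem of_computable {f : ℕ → ℕ} (hf : Computable f) : OracleRecursiveIn O ↑f :=
  of_partrec (Partrec.nat_iff.1 hf)

theorem trans {O' : ℕ → ℕ} {f : ℕ →. ℕ} (hf : OracleRecursiveIn O f)
    (hO : OracleRecursiveIn O' ↑O) : OracleRecursiveIn O' f := by
  induction hf with
  | oracle => exact hO
  | zero => exact .zero
  | succ => exact .succ
  | left => exact .left
  | right => exact .right
  | pair _ _ ih₁ ih₂ => exact .pair ih₁ ih₂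
  | comp _ _ ih₁ ih₂ => exact .comp ih₁ ih₂
  | prec _ _ ih₁ ih₂ => exact .prec ih₁ ih₂
  | rfind _ ih => exact .rfind ih

theorem comp_total {f : ℕ →. ℕ} {g : ℕ → ℕ} (hf : OracleRecursiveIn O f)
    (hg : OracleRecursiveIn O ↑g) : OracleRecursiveIn O fun n => f (g n) := by
  refine (congrArg (OracleRecursiveIn O) (funext fun n => ?_)).mp (hf.comp hg)
  exact Part.bind_some (g n) f

theorem map {f : ℕ →. ℕ} {g : ℕ → ℕ} (hf : OracleRecursiveIn O f)
    (hg : OracleRecursiveIn O ↑g) : OracleRecursiveIn O fun n => (f n).map g := by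
  refine (congrArg (OracleRecursiveIn O) (funext fun n => ?_)).mp (hg.comp hf)
  exact Part.bind_some_eq_map g (f n)

/-- Only the `then` branch may be partial: primitive recursion evaluates the `else` branch
as its base case before taking a step. -/
theorem ite {p : ℕ → Prop} [DecidablePred p] {f : ℕ →. ℕ} {g : ℕ → ℕ}
    (hp : OracleRecursiveIn O ↑(fun n => if p n then 1 else 0 : ℕ → ℕ))
    (hf : OracleRecursiveIn O f) (hg : OracleRecursiveIn O ↑g) :
    OracleRecursiveIn O fun n => if p n then f n else Part.some (g n) := by
  have hrec := (prec hg (hf.comp_total .left)).comp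
    (.pair (of_computable Computable.id) hp)
  refine (congrArg (OracleRecursiveIn O) (funext fun n => ?_)).mp hrec
  by_cases hpn : p n <;> simp [hpn, Seq.seq, Part.bind_eq_bind]

end OracleRecursiveIn

section GOp

variable {S : Type*} {U : ℕ →. ℕ} (μ ν : ℕ → S)

theorem numRed_GOp_left {e : ℕ} (he : ∀ x, U (Nat.pair e x) = Part.some x) :
    NumRed μ (GOp μ ν U) :=
  ⟨fun n => Nat.pair 0 (Nat.pair e n),
    (Primrec₂.natPair.comp (.const 0) (Primrec₂.natPair.comp (.const e) .id)).to_comp,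
    fun n => by simp [GOp, he]⟩

theorem numRed_GOp_right {x : ℕ} (hx : U x = Part.none) : NumRed ν (GOp μ ν U) :=
  ⟨fun n => Nat.pair n x, (Primrec₂.natPair.comp .id (.const x)).to_comp,
    fun n => by simp [GOp, hx]⟩

open Classical in
theorem GOp_eq_numJoin (m : ℕ) :
    GOp μ ν U m = NumJoin μ ν
      (if hd : (U m.unpair.2).Dom then 2 * (U m.unpair.2).get hd else 2 * m.unpair.1 + 1) := by
  by_cases hd : (U m.unpair.2).Dom <;> simp [GOp, NumJoin, hd, Nat.add_mod, Nat.mul_add_div]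

theorem numRedIn_GOp_numJoin (hU : OracleRecursiveIn (jumpOf U) U) :
    NumRedIn (jumpOf U) (GOp μ ν U) (NumJoin μ ν) := by
  classical
  refine ⟨_, ?_, GOp_eq_numJoin μ ν⟩
  have hdom : OracleRecursiveIn (jumpOf U)
      ↑(fun m => if (U m.unpair.2).Dom then 1 else 0 : ℕ → ℕ) :=
    OracleRecursiveIn.oracle.comp_total .right
  have hdouble : OracleRecursiveIn (jumpOf U) ↑(fun v => 2 * v : ℕ → ℕ) :=
    .of_computable (Primrec.nat_mul.comp (.const 2) .id).to_comp
  have hodd : OracleRecursiveIn (jumpOf U) ↑(fun m => 2 * m.unpair.1 + 1 : ℕ → ℕ) :=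
    .of_computable (Primrec.succ.comp
      (Primrec.nat_mul.comp (.const 2) (Primrec.fst.comp .unpair))).to_comp
  refine (congrArg (OracleRecursiveIn _) (funext fun m => ?_)).mp
    (hdom.ite ((hU.comp_total .right).map hdouble) hodd)
  by_cases hd : (U m.unpair.2).Dom
  · simpa [hd] using Part.eq_some_iff.2 (Part.mem_map _ (Part.get_mem hd))
  · simp [hd]

end GOp

/-- `μ ≤ G(μ,ν,h)`, `ν ≤ G(μ,ν,h)`, and `G(μ,ν,h) ≤^{h'} μ ⊕ ν`,
where `U` is the universal `h`-partial computable function (characterized by the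
hypotheses) and `h' = jumpOf U` is the jump of `h`. -/
theorem GOp_between {S : Type*} (h : ℕ → ℕ) (U : ℕ →. ℕ)
    (hU : OracleRecursiveIn h U)
    (huniv : ∀ ψ : ℕ →. ℕ, OracleRecursiveIn h ψ → ∃ e : ℕ, ∀ x, ψ x = U (Nat.pair e x))
    (hh : OracleRecursiveIn (jumpOf U) ↑h)
    (μ ν : ℕ → S) :
    NumRed μ (GOp μ ν U) ∧ NumRed ν (GOp μ ν U) ∧
      NumRedIn (jumpOf U) (GOp μ ν U) (NumJoin μ ν) := by
  obtain ⟨e, he⟩ := huniv ↑(id : ℕ → ℕ) (.of_computable Computable.id)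
  obtain ⟨z, hz⟩ := huniv (fun _ => Part.none) (.of_partrec .none)
  exact ⟨numRed_GOp_left μ ν fun x => (he x).symm, numRed_GOp_right μ ν (hz 0).symm,
    numRedIn_GOp_numJoin μ ν (hU.trans hh)⟩
end

section
/- If the numbering ν is h-complete with respect to some s ∈ S, then G(μ,ν,h) is also h-complete with respect to s. -/
/-! The totalizer of `ψ` for `G` sends `x` to `⟨t₁ x, ⟨e, x⟩⟩`, where `t₁` totalizes the first
component of `ψ` for `ν` (with default `s`) and `e` is a `U`-index of `x ↦ U (ψ x).2`. If `ψ x`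
converges to `⟨n, z⟩`, then `U ⟨e, x⟩ = U z` and `ν (t₁ x) = ν n`, so both codes have the same
`G`-value; if it diverges, so does `U ⟨e, x⟩`, and `G` falls back to `ν (t₁ x) = s`. -/

namespace OracleRecursiveIn

variable {O : ℕ → ℕ} {ψ U : ℕ →. ℕ}

theorem map_unpair_fst (hψ : OracleRecursiveIn O ψ) :
    OracleRecursiveIn O fun x => (ψ x).map fun y => y.unpair.1 := by
  have hfun : (fun x => (ψ x).map fun y => y.unpair.1 : ℕ →. ℕ) =
      fun x => ψ x >>= ((↑fun y : ℕ => y.unpair.1) : ℕ →. ℕ) :=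
    funext fun x => (Part.bind_some_eq_map _ (ψ x)).symm
  rw [hfun]
  exact comp left hψ

theorem bind_unpair_snd (hψ : OracleRecursiveIn O ψ) (hU : OracleRecursiveIn O U) :
    OracleRecursiveIn O fun x => (ψ x).bind fun y => U y.unpair.2 := by
  have hfun : (fun x => (ψ x).bind fun y => U y.unpair.2 : ℕ →. ℕ) =
      fun x => ψ x >>= fun y => (y.unpair.2 : Part ℕ) >>= U :=
    funext fun x => congrArg (Part.bind (ψ x)) (funext fun y => (Part.bind_some _ U).symm)
  rw [hfun]
  exact comp (comp hU right) hψ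

end OracleRecursiveIn

section GOp

variable {S : Type*} (μ ν : ℕ → S) {U : ℕ →. ℕ}

open Classical in
theorem GOp_pair (a b : ℕ) :
    GOp μ ν U (Nat.pair a b) = if hd : (U b).Dom then μ ((U b).get hd) else ν a := by
  simp [GOp]

theorem GOp_pair_of_not_dom {a b : ℕ} (hb : ¬(U b).Dom) : GOp μ ν U (Nat.pair a b) = ν a := by
  rw [GOp_pair, dif_neg hb]

theorem GOp_pair_congr {a a' b b' : ℕ} (ha : ν a = ν a') (hb : U b = U b') :
    GOp μ ν U (Nat.pair a b) = GOp μ ν U (Nat.pair a' b') := by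
  rw [GOp_pair, GOp_pair, hb, ha]

end GOp

theorem GOp_complete_general {S : Type*} (h : ℕ → ℕ) (U : ℕ →. ℕ)
    (hU : OracleRecursiveIn h U)
    (huniv : ∀ ψ : ℕ →. ℕ, OracleRecursiveIn h ψ → ∃ e : ℕ, ∀ x, ψ x = U (Nat.pair e x))
    (μ ν : ℕ → S) (s : S)
    (hc : CompleteAt h ν s) :
    CompleteAt h (GOp μ ν U) s := by
  intro ψ hψ
  obtain ⟨e, he⟩ := huniv _ (hψ.bind_unpair_snd hU)
  obtain ⟨t₁, ht₁c, ht₁, ht₁s⟩ := hc _ hψ.map_unpair_fst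
  refine ⟨fun x => Nat.pair (t₁ x) (Nat.pair e x),
    Primrec₂.natPair.to_comp.comp ht₁c
      (Primrec₂.natPair.to_comp.comp (Computable.const e) Computable.id), ?_, ?_⟩
  · intro x hx
    have hfst : ν (t₁ x) = ν ((ψ x).get hx).unpair.1 := ht₁ x hx
    have hsnd : U (Nat.pair e x) = U ((ψ x).get hx).unpair.2 := by
      rw [← he, Part.bind_of_mem (Part.get_mem hx)]
    rw [GOp_pair_congr μ ν hfst hsnd, Nat.pair_unpair]
  · intro x hx
    have hdiv : ¬(U (Nat.pair e x)).Dom := by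
      rw [← he]
      exact fun hd => hx (Part.bind_dom.1 hd).1
    rw [GOp_pair_of_not_dom μ ν hdiv]
    exact ht₁s x hx

/-- if `ν` is `h`-complete w.r.t. `s ∈ rng ν`, then so is `G(μ,ν,h)`,
where `U` is the universal `h`-partial computable function. -/
theorem GOp_complete {S : Type*} (h : ℕ → ℕ) (U : ℕ →. ℕ)
    (hU : OracleRecursiveIn h U)
    (huniv : ∀ ψ : ℕ →. ℕ, OracleRecursiveIn h ψ → ∃ e : ℕ, ∀ x, ψ x = U (Nat.pair e x))
    (μ ν : ℕ → S) (s : S) (hs : ∃ n, ν n = s)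
    (hc : CompleteAt h ν s) :
    CompleteAt h (GOp μ ν U) s :=
  GOp_complete_general h U hU huniv μ ν s hc
end
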